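/- On a 2D Cartesian staggered grid with periodic boundaries, let the discrete gradient be ∇_c^p φ_p = (1/|Ω_c|) Σ_{p∈Ω_c} l_{pc} n_{pc} φ_p, with corner vectors l_{pc} n_{pc} = ½(±Δy, ±Δx); then for any scalar field φ defined on vertices the discrete curl of the discrete gradient vanishes: ∇_c^p × ∇_p^a φ_a = 0. -/
import Mathlib


noncomputable section

/-- On a uniform 2D Cartesian grid, the scaled outward corner normal `l_pc n_pc` of a cell
at the corner with relative position `(a, b)` (with `a, b ∈ {0,1}` encoded as `Bool`):
`½(±Δy, ±Δx)`. -/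
def cornerNormal (Δx Δy : ℝ) (a b : Bool) : ℝ × ℝ :=
  ((1 / 2) * (if a then Δy else -Δy), (1 / 2) * (if b then Δx else -Δx))

/-- The vertex at relative position `(a, b)` of the cell with lower-left vertex `c`. -/
def cellVertex (c : ℤ × ℤ) (a b : Bool) : ℤ × ℤ :=
  (c.1 + (if a then 1 else 0), c.2 + (if b then 1 else 0))

/-- The cell center at relative position `(a, b)` of the dual cell around the vertex `p`. -/
def dualCorner (p : ℤ × ℤ) (a b : Bool) : ℤ × ℤ :=
  (p.1 - 1 + (if a then 1 else 0), p.2 - 1 + (if b then 1 else 0))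

/-- The discrete gradient `∇_c^p φ_p = (1/|Ω_c|) Σ_{p∈Ω_c} l_pc n_pc φ_p` of a scalar
field defined on vertices, producing values at cell centers. -/
def dGrad (Δx Δy : ℝ) (φ : ℤ × ℤ → ℝ) (c : ℤ × ℤ) : ℝ × ℝ :=
  (Δx * Δy)⁻¹ • ∑ a : Bool, ∑ b : Bool, φ (cellVertex c a b) • cornerNormal Δx Δy a b

/-- The discrete (scalar, 2D) curl `∇_p^c × W_c = (1/|Ω_p|) Σ_{c∈Ω_p} l_pc n_cp × W_c` of a
vector field defined on cell centers, producing values at vertices; here the corner normal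
`n_cp = −n_pc` of the dual cell is `cornerNormal Δx Δy a b` for the cell at relative
position `(a, b)`. -/
def dCurl (Δx Δy : ℝ) (W : ℤ × ℤ → ℝ × ℝ) (p : ℤ × ℤ) : ℝ :=
  (Δx * Δy)⁻¹ * ∑ a : Bool, ∑ b : Bool,
    ((cornerNormal Δx Δy a b).1 * (W (dualCorner p a b)).2
      - (cornerNormal Δx Δy a b).2 * (W (dualCorner p a b)).1)

/-- On a uniform 2D Cartesian staggered grid, the discrete curl of the discrete gradient
of any vertex-based scalar field vanishes identically: `∇_p^c × ∇_c^a φ_a = 0`. -/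
theorem discrete_curl_grad_zero (Δx Δy : ℝ) (hx : 0 < Δx) (hy : 0 < Δy)
    (φ : ℤ × ℤ → ℝ) :
    ∀ p : ℤ × ℤ, dCurl Δx Δy (dGrad Δx Δy φ) p = 0 := by
  intro p
  simp only [dCurl, dGrad, cornerNormal, cellVertex, dualCorner, Fintype.sum_bool,
    Prod.smul_mk, smul_eq_mul, Prod.mk_add_mk, Prod.fst_add, Prod.snd_add, Prod.smul_fst,
    Prod.smul_snd, cond_true, cond_false, if_true, if_false]
  ring_nf

end
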